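/- arXiv:1405.2449 — 3 statements merged into one kernel-verified Lean document; each statement's English description precedes it below -/
import Mathlib

section
/- If f is a rational function P(x)/Q(x) with P, Q polynomials over the rationals, Q not identically zero, and f(n) is an integer for every sufficiently large natural number n, then f agrees with a polynomial function on all sufficiently large integers (i.e., there is a polynomial S with rational coefficients such that f(n) = S(n) for all sufficiently large n). -/
/-!
Divide with remainder, `P = Q S + R` with `deg R < deg Q`, so that `P(n)/Q(n) = S(n) + R(n)/Q(n)`.
Choose `d ≠ 0` with `d S(n) ∈ ℤ` for every integer `n`. Then `d R(n)/Q(n)` is eventually an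
integer, and it tends to `0` because `deg R < deg Q`; hence it eventually vanishes, and
`P(n)/Q(n) = S(n)` for large `n`.
-/

open Polynomial Filter Topology

theorem IsLocalization.exists_mem_forall_mul_eval_algebraMap {R K : Type*} [CommRing R]
    [CommRing K] [Algebra R K] (M : Submonoid R) [IsLocalization M K] (p : K[X]) :
    ∃ b ∈ M, ∀ x : R, ∃ y : R,
      algebraMap R K b * p.eval (algebraMap R K x) = algebraMap R K y := by
  obtain ⟨b, hb, hmap⟩ := integerNormalization_spec M p
  refine ⟨b, hb, fun x => ⟨(integerNormalization M p).eval x, ?_⟩⟩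
  rw [← eval₂_at_apply, ← eval_map, hmap, eval_smul, Algebra.smul_def]

theorem Filter.Tendsto.eventually_eq_zero_of_intCast {α K : Type*} [Ring K] [LinearOrder K]
    [IsStrictOrderedRing K] [TopologicalSpace K] [OrderTopology K] {l : Filter α} {g : α → K}
    (hg : Tendsto g l (𝓝 0)) (hint : ∀ᶠ x in l, ∃ z : ℤ, g x = z) : ∀ᶠ x in l, g x = 0 := by
  filter_upwards [hint, hg.eventually (Ioo_mem_nhds neg_one_lt_zero zero_lt_one)]
  rintro x ⟨z, hz⟩ ⟨hlo, hhi⟩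
  rw [hz] at hlo hhi ⊢
  have : -1 < z := by exact_mod_cast hlo
  have : z < 1 := by exact_mod_cast hhi
  obtain rfl : z = 0 := by omega
  simp

theorem Polynomial.eval_div_eval_eq_eval_div_add {K : Type*} [Field K] (P Q : K[X]) {x : K}
    (hx : Q.eval x ≠ 0) : P.eval x / Q.eval x = (P / Q).eval x + (P % Q).eval x / Q.eval x := by
  conv_lhs => rw [← EuclideanDomain.div_add_mod P Q]
  rw [eval_add, eval_mul]
  field_simp

/-- If `f = P/Q` is a rational function over ℚ with `Q ≠ 0` and `f(n) ∈ ℤ`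
for all sufficiently large naturals `n`, then `f` agrees with a polynomial for all
sufficiently large `n`. -/
theorem rational_integer_valued_is_polynomial (P Q : Polynomial ℚ) (hQ : Q ≠ 0)
    (h : ∃ N : ℕ, ∀ n : ℕ, N ≤ n →
      Q.eval (n : ℚ) ≠ 0 ∧ ∃ z : ℤ, P.eval (n : ℚ) / Q.eval (n : ℚ) = (z : ℚ)) :
    ∃ (S : Polynomial ℚ) (M : ℕ), ∀ n : ℕ, M ≤ n →
      P.eval (n : ℚ) / Q.eval (n : ℚ) = S.eval (n : ℚ) := by
  obtain ⟨N, hN⟩ := h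
  obtain ⟨d, hdM, hd⟩ :=
    IsLocalization.exists_mem_forall_mul_eval_algebraMap (nonZeroDivisors ℤ) (P / Q)
  have hlim : Tendsto (fun n : ℕ => (d : ℚ) * ((P % Q).eval (n : ℚ) / Q.eval (n : ℚ)))
      atTop (𝓝 0) := by
    simpa using ((div_tendsto_atTop_zero_of_degree_lt _ _ (degree_mod_lt P hQ)).comp
      tendsto_natCast_atTop_atTop).const_mul (d : ℚ)
  have hint : ∀ᶠ n : ℕ in atTop,
      ∃ z : ℤ, (d : ℚ) * ((P % Q).eval (n : ℚ) / Q.eval (n : ℚ)) = z := by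
    filter_upwards [eventually_ge_atTop N] with n hn
    obtain ⟨hQn, z, hz⟩ := hN n hn
    obtain ⟨w, hw⟩ := hd n
    refine ⟨d * z - w, ?_⟩
    simp only [algebraMap_int_eq, eq_intCast, Int.cast_natCast] at hw
    rw [eval_div_eval_eq_eval_div_add P Q hQn] at hz
    push_cast
    linear_combination (d : ℚ) * hz - hw
  obtain ⟨M, hM⟩ := eventually_atTop.mp
    ((hlim.eventually_eq_zero_of_intCast hint).and (eventually_ge_atTop N))
  refine ⟨P / Q, M, fun n hn => ?_⟩
  obtain ⟨hzero, hNn⟩ := hM n hn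
  have hd0 : (d : ℚ) ≠ 0 := by exact_mod_cast nonZeroDivisors.ne_zero hdM
  rw [eval_div_eval_eq_eval_div_add P Q (hN n hNn).1, (mul_eq_zero.mp hzero).resolve_left hd0,
    add_zero]
end

section
/- Let (A_n) be a strongly polynomial sequence of finite graphs with maximum degree uniformly bounded by D, and let d be the degree of the polynomial n ↦ |V(A_n)|. Then every connected graph occurring as an induced subgraph of some A_n already occurs as an induced subgraph of some A_m with m ≤ d+1; consequently the set of isomorphism types of connected components of the graphs A_n is finite. -/
open SimpleGraph

/-- The number of graph homomorphisms from `F` to `A`. -/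
noncomputable def homCount {α β : Type*} (F : SimpleGraph α) (A : SimpleGraph β) : ℕ :=
  Nat.card (F →g A)

/-- A sequence of finite graphs is strongly polynomial if every homomorphism count
from a fixed finite graph is a polynomial function of `n`. -/
def StronglyPolynomial {V : ℕ → Type} (A : ∀ n, SimpleGraph (V n)) : Prop :=
  ∀ (W : Type) [Fintype W] (F : SimpleGraph W),
    ∃ P : Polynomial ℚ, ∀ n : ℕ, (homCount F (A n) : ℚ) = P.eval (n : ℚ)

/-!
Sorting homomorphisms `F →g A_n` by their kernel writes `hom(F, A_n)` as the number of injective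
homomorphisms (copies) of `F` plus copy counts of proper quotients of `F`; sorting copies by the
graph they pull back writes `copy(F, A_n)` as `ind(F, A_n)` plus induced counts of proper
supergraphs of `F` on the same vertex set. Both systems are triangular, so `n ↦ ind(F, A_n)` is a
polynomial `Q`. For connected `F`, a homomorphism is determined by the image of one vertex and,
along a shortest-path tree, a choice among at most `D` neighbours for every other vertex, so
`Q(n) ≤ D^(|F| - 1) P(n)` and `deg Q ≤ deg P`. If `F` occurs in some `A_n` then `Q ≠ 0`, so `Q`
does not vanish at some `m ≤ deg P`. Every component therefore embeds into one of `A_0, …, A_d`,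
which bounds its size.
-/

open Polynomial

instance {α : Type*} [Finite α] : Finite (Setoid α) :=
  Finite.of_injective (fun s : Setoid α => ⇑s) fun _ _ h =>
    Setoid.ext fun _ _ => iff_of_eq (congrFun₂ h _ _)

lemma Nat.card_eq_sum_card_fiber {α ι : Type*} [Finite α] [Fintype ι] (g : α → ι) :
    Nat.card α = ∑ i, Nat.card {a // g a = i} := by
  rw [← Nat.card_sigma]
  exact Nat.card_congr (Equiv.sigmaFiberEquiv g).symm

lemma Setoid.card_quotient_lt {α : Type*} [Finite α] {s : Setoid α} (hs : s ≠ ⊥) :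
    Nat.card (Quotient s) < Nat.card α := by
  have := Fintype.ofFinite α
  have := Fintype.ofFinite (Quotient s)
  simp only [Nat.card_eq_fintype_card]
  refine Fintype.card_lt_of_surjective_not_injective _ Quotient.mk_surjective fun h => hs ?_
  rw [← Setoid.ker_mk_eq s]
  exact Setoid.ker_eq_bot_iff.mpr h

lemma mem_of_sum_mem_of_forall_ne {G S ι : Type*} [AddCommGroup G] [SetLike S G]
    [AddSubgroupClass S G] {K : S} [Fintype ι] {f : ι → G} (a : ι) (hsum : ∑ i, f i ∈ K)
    (hf : ∀ i ≠ a, f i ∈ K) : f a ∈ K := by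
  classical
  rw [← Finset.add_sum_erase _ _ (Finset.mem_univ a)] at hsum
  exact (add_mem_cancel_right (sum_mem fun i hi => hf i (Finset.ne_of_mem_erase hi))).mp hsum

noncomputable def polynomialSeqs : Subring (ℕ → ℚ) :=
  (RingHom.pi fun n : ℕ => evalRingHom (n : ℚ)).range

lemma mem_polynomialSeqs {g : ℕ → ℚ} :
    g ∈ polynomialSeqs ↔ ∃ P : ℚ[X], ∀ n : ℕ, g n = P.eval (n : ℚ) := by
  simp only [polynomialSeqs, RingHom.mem_range, funext_iff, RingHom.pi_apply, coe_evalRingHom,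
    eq_comm]

lemma card_fiber_mem_polynomialSeqs {α : ℕ → Type*} [∀ n, Finite (α n)] {ι : Type*} [Fintype ι]
    (g : ∀ n, α n → ι) (a : ι) (hcard : (fun n => (Nat.card (α n) : ℚ)) ∈ polynomialSeqs)
    (hfiber : ∀ i ≠ a, (fun n => (Nat.card {x // g n x = i} : ℚ)) ∈ polynomialSeqs) :
    (fun n => (Nat.card {x // g n x = a} : ℚ)) ∈ polynomialSeqs := by
  refine mem_of_sum_mem_of_forall_ne a ?_ hfiber
  convert hcard using 1
  ext n
  simp [Finset.sum_apply, Nat.card_eq_sum_card_fiber (g n)]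

namespace Polynomial

variable {𝕜 : Type*} [NormedField 𝕜] [LinearOrder 𝕜] [IsStrictOrderedRing 𝕜] [OrderTopology 𝕜]
  [Archimedean 𝕜]

theorem natDegree_le_of_eval_natCast_le {P Q : 𝕜[X]} {C : 𝕜} (hQ0 : Q ≠ 0)
    (hQ : ∀ n : ℕ, 0 ≤ Q.eval (n : 𝕜)) (hle : ∀ n : ℕ, Q.eval (n : 𝕜) ≤ C * P.eval (n : 𝕜)) :
    Q.natDegree ≤ P.natDegree := by
  by_contra! hlt
  have hdeg : (C • P).degree < Q.degree := (degree_smul_le C P).trans_lt (degree_lt_degree hlt)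
  have hratio := ((div_tendsto_atTop_zero_of_degree_lt _ _ hdeg).comp
    tendsto_natCast_atTop_atTop).eventually_lt_const one_pos
  have hroot := tendsto_natCast_atTop_atTop.eventually (eventually_atTop_not_isRoot Q hQ0)
  obtain ⟨n, hn, hQn⟩ := (hratio.and hroot).exists
  have hpos : 0 < Q.eval (n : 𝕜) := (hQ n).lt_of_ne' hQn
  simp only [Function.comp_apply, eval_smul, smul_eq_mul] at hn
  exact (hle n).not_gt ((div_lt_one hpos).mp hn)

theorem exists_le_natDegree_eval_natCast_ne_zero {R : Type*} [CommRing R] [IsDomain R]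
    [CharZero R] {Q : R[X]} (hQ : Q ≠ 0) : ∃ m ≤ Q.natDegree, Q.eval (m : R) ≠ 0 := by
  by_contra! h
  refine hQ (eq_zero_of_natDegree_lt_card_of_eval_eq_zero Q
    (f := fun i : Fin (Q.natDegree + 1) => ((i : ℕ) : R)) ?_ (fun i => h i (Nat.lt_succ_iff.mp i.2))
    (by simp))
  exact fun i j hij => Fin.ext (Nat.cast_injective hij)

end Polynomial

namespace SimpleGraph

variable {W β : Type*} {F : SimpleGraph W} {B : SimpleGraph β}

instance [Finite W] [Finite β] : Finite (F ↪g B) :=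
  Finite.of_injective _ (DFunLike.coe_injective (F := F ↪g B))

instance [Finite W] [Finite β] : Finite (Copy F B) :=
  Finite.of_injective _ (DFunLike.coe_injective (F := Copy F B))

lemma Hom.not_ker_of_adj (f : F →g B) {u v : W} (h : F.Adj u v) : ¬ Setoid.ker f u v :=
  (f.map_adj h).ne

def homKerEquivCopyMap (s : Setoid W) (hs : ∀ ⦃u v⦄, F.Adj u v → ¬ s u v) :
    {f : F →g B // Setoid.ker f = s} ≃ Copy (F.map (Quotient.mk s)) B where
  toFun f :=
    { toHom :=
        { toFun := Quotient.lift f fun u v h => by rw [← f.2] at h; exact h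
          map_rel' := by
            rintro _ _ ⟨-, u, v, huv, rfl, rfl⟩
            exact f.1.map_rel huv }
      injective' := by
        rintro ⟨u⟩ ⟨v⟩ h
        exact Quotient.sound (f.2 ▸ h) }
  invFun c :=
    ⟨c.toHom.comp (Hom.map _ F fun h heq => hs h (Quotient.exact heq)),
      Setoid.ext fun _ _ => c.injective.eq_iff.trans Quotient.eq⟩
  left_inv _ := rfl
  right_inv _ := by ext ⟨_⟩; rfl

def homKerBotEquivCopy : {f : F →g B // Setoid.ker f = ⊥} ≃ Copy F B where
  toFun f := ⟨f.1, Setoid.ker_eq_bot_iff.mp f.2⟩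
  invFun c := ⟨c.toHom, Setoid.ker_eq_bot_iff.mpr c.injective⟩
  left_inv _ := rfl
  right_inv _ := rfl

def copyComapEquivEmbedding {G : SimpleGraph W} (hFG : F ≤ G) :
    {c : Copy F B // B.comap c = G} ≃ (G ↪g B) where
  toFun c := ⟨c.1.toEmbedding, fun {_ _} => by obtain ⟨c, rfl⟩ := c; rfl⟩
  invFun e := ⟨⟨e.toHom.comp (Hom.ofLE hFG), e.injective⟩, by ext; exact e.map_adj_iff⟩
  left_inv _ := rfl
  right_inv _ := rfl

lemma card_embedding_le_card_hom [Finite W] [Finite β] : Nat.card (F ↪g B) ≤ Nat.card (F →g B) :=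
  Nat.card_le_card_of_injective (fun e => e.toHom) fun e e' h =>
    RelEmbedding.ext fun x => DFunLike.congr_fun (h : e.toHom = e'.toHom) x

lemma Connected.exists_adj_dist_lt (hF : F.Connected) (w₀ : W) {w : W} (hw : w ≠ w₀) :
    ∃ u, F.Adj u w ∧ F.dist w₀ u < F.dist w₀ w := by
  obtain ⟨p, hp⟩ := hF.exists_walk_length_eq_dist w w₀
  cases p with
  | nil => exact absurd rfl hw
  | cons h q =>
    refine ⟨_, h.symm, ?_⟩
    rw [dist_comm, dist_comm (u := w₀), ← hp, Walk.length_cons]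
    exact Nat.lt_succ_of_le (dist_le q)

theorem Connected.card_hom_le [Fintype W] [Fintype β] {D : ℕ} (hF : F.Connected)
    (hB : ∀ v, Nat.card (B.neighborSet v) ≤ D) :
    Nat.card (F →g B) ≤ D ^ (Fintype.card W - 1) * Fintype.card β := by
  classical
  obtain ⟨w₀⟩ := hF.nonempty
  choose parent hparent using fun w : {w // w ≠ w₀} => hF.exists_adj_dist_lt w₀ w.2
  have label (v : β) : B.neighborSet v ↪ Fin D := by
    refine (Function.Embedding.nonempty_of_card_le ?_).some
    rw [Fintype.card_fin, ← Nat.card_eq_fintype_card]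
    exact hB v
  have label_inj {v v' : β} (hv : v = v') {x y : β} (hx : x ∈ B.neighborSet v)
      (hy : y ∈ B.neighborSet v') (h : label v ⟨x, hx⟩ = label v' ⟨y, hy⟩) : x = y := by
    subst hv
    exact congrArg Subtype.val ((label v).injective h)
  let code (f : F →g B) : ({w // w ≠ w₀} → Fin D) × β :=
    (fun w => label (f (parent w)) ⟨f w, f.map_adj (hparent w).1⟩, f w₀)
  have code_inj : Function.Injective code := by
    intro f g hfg
    simp only [code, Prod.ext_iff, funext_iff] at hfg
    ext w
    induction hk : F.dist w₀ w using Nat.strong_induction_on generalizing w with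
    | _ k ih =>
    by_cases hw : w = w₀
    · exact hw ▸ hfg.2
    · exact label_inj (ih _ (hk ▸ (hparent ⟨w, hw⟩).2) _ rfl) _ _ (hfg.1 ⟨w, hw⟩)
  calc Nat.card (F →g B) ≤ Nat.card (({w // w ≠ w₀} → Fin D) × β) :=
        Nat.card_le_card_of_injective code code_inj
    _ = D ^ (Fintype.card W - 1) * Fintype.card β := by
        simp [Nat.card_eq_fintype_card]

end SimpleGraph

namespace StronglyPolynomial

open SimpleGraph

variable {V : ℕ → Type} {A : ∀ n, SimpleGraph (V n)}

lemma card_hom_mem (hA : StronglyPolynomial A) {W : Type} [Finite W] (F : SimpleGraph W) :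
    (fun n => (Nat.card (F →g A n) : ℚ)) ∈ polynomialSeqs := by
  have := Fintype.ofFinite W
  exact mem_polynomialSeqs.mpr (hA W F)

theorem card_copy_mem [∀ n, Finite (V n)] (hA : StronglyPolynomial A) {W : Type} [Finite W]
    (F : SimpleGraph W) :
    (fun n => (Nat.card (Copy F (A n)) : ℚ)) ∈ polynomialSeqs := by
  induction hk : Nat.card W using Nat.strong_induction_on generalizing W with
  | _ k ih =>
  have := Fintype.ofFinite (Setoid W)
  have hfiber : ∀ s : Setoid W, s ≠ ⊥ →
      (fun n => (Nat.card {f : F →g A n // Setoid.ker f = s} : ℚ)) ∈ polynomialSeqs := by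
    intro s hs
    by_cases hF : ∀ ⦃u v⦄, F.Adj u v → ¬ s u v
    · simp_rw [Nat.card_congr (homKerEquivCopyMap s hF)]
      exact ih _ (hk ▸ Setoid.card_quotient_lt hs) _ rfl
    · have (n : ℕ) : IsEmpty {f : F →g A n // Setoid.ker f = s} :=
        ⟨fun f => hF fun _ _ huv => f.2 ▸ f.1.not_ker_of_adj huv⟩
      simp only [Nat.card_of_isEmpty, Nat.cast_zero]
      exact zero_mem _
  simpa only [Nat.card_congr homKerBotEquivCopy] using
    card_fiber_mem_polynomialSeqs (fun n (f : F →g A n) => Setoid.ker f) ⊥ (hA.card_hom_mem F)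
      hfiber

theorem card_embedding_mem [∀ n, Finite (V n)] (hA : StronglyPolynomial A) {W : Type} [Finite W]
    (F : SimpleGraph W) :
    (fun n => (Nat.card (F ↪g A n) : ℚ)) ∈ polynomialSeqs := by
  induction F using WellFoundedGT.induction with
  | _ F ih =>
  have := Fintype.ofFinite (SimpleGraph W)
  have hfiber : ∀ G ≠ F,
      (fun n => (Nat.card {c : Copy F (A n) // (A n).comap c = G} : ℚ)) ∈ polynomialSeqs := by
    intro G hG
    by_cases hFG : F ≤ G
    · simp_rw [Nat.card_congr (copyComapEquivEmbedding hFG)]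
      exact ih G (lt_of_le_of_ne hFG hG.symm)
    · have (n : ℕ) : IsEmpty {c : Copy F (A n) // (A n).comap c = G} :=
        ⟨fun c => hFG (c.2 ▸ c.1.toHom.le_comap)⟩
      simp only [Nat.card_of_isEmpty, Nat.cast_zero]
      exact zero_mem _
  simpa only [Nat.card_congr (copyComapEquivEmbedding le_rfl)] using
    card_fiber_mem_polynomialSeqs (fun n (c : Copy F (A n)) => (A n).comap c) F
      (hA.card_copy_mem F) hfiber

theorem exists_embedding_le_natDegree [∀ n, Fintype (V n)] (hA : StronglyPolynomial A) {D : ℕ}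
    (hdeg : ∀ n (v : V n), Nat.card ((A n).neighborSet v) ≤ D) {P : ℚ[X]}
    (hP : ∀ n : ℕ, (Fintype.card (V n) : ℚ) = P.eval (n : ℚ)) {W : Type} [Fintype W]
    {F : SimpleGraph W} (hF : F.Connected) (hemb : ∃ n, Nonempty (F ↪g A n)) :
    ∃ m ≤ P.natDegree, Nonempty (F ↪g A m) := by
  obtain ⟨Q, hQ⟩ := mem_polynomialSeqs.mp (hA.card_embedding_mem F)
  obtain ⟨n₀, hn₀⟩ := hemb
  have hQ0 : Q ≠ 0 := by
    rintro rfl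
    simpa [Nat.card_ne_zero.mpr ⟨hn₀, inferInstance⟩] using hQ n₀
  have hbound (n : ℕ) : Q.eval (n : ℚ) ≤ (D ^ (Fintype.card W - 1) : ℕ) * P.eval (n : ℚ) := by
    rw [← hQ n, ← hP n]
    exact_mod_cast card_embedding_le_card_hom.trans (hF.card_hom_le (hdeg n))
  obtain ⟨m, hm, hQm⟩ := exists_le_natDegree_eval_natCast_ne_zero hQ0
  refine ⟨m, hm.trans (natDegree_le_of_eval_natCast_le hQ0 (fun n => ?_) hbound), ?_⟩
  · exact hQ n ▸ Nat.cast_nonneg _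
  · exact (Nat.card_ne_zero.mp fun h => hQm (by rw [← hQ m, h, Nat.cast_zero])).1

end StronglyPolynomial

theorem finite_setOf_connectedComponent_induce_iso {V : ℕ → Type} [∀ n, Fintype (V n)]
    {A : ∀ n, SimpleGraph (V n)} (N : ℕ)
    (h : ∀ (W : Type) [Fintype W] (F : SimpleGraph W), F.Connected →
      (∃ n, Nonempty (F ↪g A n)) → ∃ m ≤ N, Nonempty (F ↪g A m)) :
    {q : Σ j : ℕ, SimpleGraph (Fin j) | ∃ (n : ℕ) (c : (A n).ConnectedComponent),
        Nonempty (q.2 ≃g (A n).induce c.supp)}.Finite := by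
  let bound := (Finset.range (N + 1)).sup fun m => Fintype.card (V m)
  refine (Set.finite_range fun q : Σ j : Fin (bound + 1), SimpleGraph (Fin j) =>
    (⟨q.1, q.2⟩ : Σ j : ℕ, SimpleGraph (Fin j))).subset ?_
  rintro ⟨j, G⟩ ⟨n, c, ⟨e⟩⟩
  have hG : G.Connected := e.connected_iff.mpr c.maximal_connected_induce_supp.prop
  obtain ⟨m, hm, ⟨f⟩⟩ := h (Fin j) G hG ⟨n, ⟨(Embedding.induce _).comp e.toEmbedding⟩⟩
  have hj : j ≤ Fintype.card (V m) := by
    simpa using Fintype.card_le_of_embedding f.toEmbedding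
  have hVm : Fintype.card (V m) ≤ bound :=
    Finset.le_sup (f := fun m => Fintype.card (V m)) (Finset.mem_range.mpr (Nat.lt_succ_of_le hm))
  exact ⟨⟨⟨j, Nat.lt_succ_of_le (hj.trans hVm)⟩, G⟩, rfl⟩

/-- for a strongly polynomial sequence of graphs of maximum degree at most `D`,
with `|V(A_n)| = P(n)` of degree `d`, every connected graph occurring as an induced subgraph
of some `A_n` occurs in some `A_m` with `m ≤ d+1`; consequently the set of isomorphism types
of connected components of the `A_n` is finite. -/
theorem bounded_degree_components (V : ℕ → Type) [∀ n, Fintype (V n)]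
    (A : ∀ n, SimpleGraph (V n)) (D : ℕ) (hsp : StronglyPolynomial A)
    (hdeg : ∀ n (v : V n), Nat.card ((A n).neighborSet v) ≤ D)
    (P : Polynomial ℚ) (hP : ∀ n : ℕ, (Fintype.card (V n) : ℚ) = P.eval (n : ℚ)) :
    (∀ (W : Type) [Fintype W] (F : SimpleGraph W), F.Connected →
        (∃ n, Nonempty (F ↪g A n)) → ∃ m, m ≤ P.natDegree + 1 ∧ Nonempty (F ↪g A m))
    ∧ {q : Σ j : ℕ, SimpleGraph (Fin j) | ∃ (n : ℕ) (c : (A n).ConnectedComponent),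
        Nonempty (q.2 ≃g (A n).induce c.supp)}.Finite := by
  have hsmall : ∀ (W : Type) [Fintype W] (F : SimpleGraph W), F.Connected →
      (∃ n, Nonempty (F ↪g A n)) → ∃ m ≤ P.natDegree + 1, Nonempty (F ↪g A m) := by
    intro W _ F hF hemb
    obtain ⟨m, hm, he⟩ := hsp.exists_embedding_le_natDegree hdeg hP hF hemb
    exact ⟨m, hm.trans (Nat.le_succ _), he⟩
  exact ⟨hsmall, finite_setOf_connectedComponent_induce_iso _ hsmall⟩
end

section
/- Let F_k be the bipartite graph with parts V_1 of size k and V_2 of size 2^k in which the vertices of V_2 have pairwise distinct neighborhoods in V_1 (realizing all subsets of V_1). Then any graph F' obtained from F_k by adding edges inside V_1 and inside V_2 has at least C(2^k, k) / (k! · C(2k, k)) pairwise non-isomorphic induced subgraphs of order 2k. -/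
/-!
Every `k`-set `S ⊆ V₂` gives an induced subgraph `F'[V₁ ⊕ S]` on `2k` vertices, and there are
`C(2^k, k)` such sets. An isomorphism class arises from at most `k! · C(2k, k)` of them: once
the positions of `V₁` inside a fixed representative are known, each remaining vertex is
identified with the unique vertex of `V₂` having the same neighbourhood in `V₁`, so `S` is
determined by an embedding `V₁ ↪ Fin (2k)`.
-/

open SimpleGraph Finset

namespace SimpleGraph

def isoSetoid (V : Type*) : Setoid (SimpleGraph V) where
  r G H := Nonempty (G ≃g H)
  iseqv := ⟨fun _ => ⟨Iso.refl⟩, fun ⟨e⟩ => ⟨e.symm⟩, fun ⟨e⟩ ⟨f⟩ => ⟨e.trans f⟩⟩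

variable {α β V W : Type*}

theorem exists_pairwise_isEmpty_iso_of_card_iso_le {ι : Type*} [Fintype ι]
    (G : ι → SimpleGraph V) {m : ℕ} (hm : ∀ i, Nat.card {j // Nonempty (G i ≃g G j)} ≤ m) :
    ∃ N, Fintype.card ι ≤ m * N ∧
      ∃ r : Fin N → ι, Pairwise fun a b => IsEmpty (G (r a) ≃g G (r b)) := by
  classical
  let q : ι → Quotient (isoSetoid V) := fun i => ⟦G i⟧
  let U := univ.image q
  have hfiber : ∀ u ∈ U, #{i ∈ univ | q i = u} ≤ m := by
    rintro _ hu
    obtain ⟨i, -, rfl⟩ := mem_image.mp hu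
    calc #{j ∈ univ | q j = q i} = Nat.card {j // Nonempty (G i ≃g G j)} := by
          rw [Nat.card_eq_fintype_card, Fintype.card_subtype]
          congr 1; ext j
          simp only [mem_filter, mem_univ, true_and, q, Quotient.eq]
          exact ⟨fun ⟨e⟩ => ⟨e.symm⟩, fun ⟨e⟩ => ⟨e.symm⟩⟩
      _ ≤ m := hm i
  refine ⟨#U, card_le_mul_card_image _ m hfiber, ?_⟩
  have hrep : ∀ a : Fin #U, ∃ i, q i = U.equivFin.symm a := fun a => by
    obtain ⟨i, -, hi⟩ := mem_image.mp (U.equivFin.symm a).2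
    exact ⟨i, hi⟩
  choose r hr using hrep
  refine ⟨r, fun a b hab => ⟨fun e => hab ?_⟩⟩
  exact U.equivFin.symm.injective (Subtype.ext ((hr a).symm.trans
    ((Quotient.sound (s := isoSetoid V) ⟨e⟩).trans (hr b))))

def induceRight (G : SimpleGraph (α ⊕ β)) (s : Set β) : SimpleGraph (α ⊕ s) :=
  G.comap ((Function.Embedding.refl α).sumMap (Function.Embedding.subtype (· ∈ s)))

def induceRightEmbedding (G : SimpleGraph (α ⊕ β)) (s : Set β) : G.induceRight s ↪g G :=
  Embedding.comap _ G

variable {G : SimpleGraph (α ⊕ β)} {H : SimpleGraph W}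

theorem subset_of_iso_induceRight
    (hG : Function.Injective fun b : β => {a : α | G.Adj (Sum.inl a) (Sum.inr b)})
    {s t : Set β} (χ : H ≃g G.induceRight s) (ψ : H ≃g G.induceRight t)
    (h : ∀ a, χ.symm (Sum.inl a) = ψ.symm (Sum.inl a)) : s ⊆ t := by
  intro b hb
  set x := χ.symm (Sum.inr ⟨b, hb⟩) with hx
  obtain ⟨⟨b', hb'⟩, hψx⟩ : ∃ b', ψ x = Sum.inr b' := by
    rcases hψx : ψ x with a | b'
    · have : χ.symm (Sum.inr ⟨b, hb⟩) = χ.symm (Sum.inl a) := by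
        rw [← hx, h, ← hψx, ψ.symm_apply_apply]
      exact absurd (χ.symm.injective this) Sum.inr_ne_inl
    · exact ⟨b', rfl⟩
  have hx' : x = ψ.symm (Sum.inr ⟨b', hb'⟩) := by rw [← hψx, ψ.symm_apply_apply]
  have : b = b' := hG <| Set.ext fun a => by
    show (G.induceRight s).Adj (.inl a) (.inr ⟨b, hb⟩) ↔
      (G.induceRight t).Adj (.inl a) (.inr ⟨b', hb'⟩)
    rw [← χ.symm.map_adj_iff, ← ψ.symm.map_adj_iff, ← hx, ← hx', h]
  exact this ▸ hb'

theorem card_iso_induceRight_le [Finite W]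
    (hG : Function.Injective fun b : β => {a : α | G.Adj (Sum.inl a) (Sum.inr b)})
    (H : SimpleGraph W) :
    Nat.card {s : Set β // Nonempty (H ≃g G.induceRight s)} ≤ Nat.card (α ↪ W) := by
  refine Nat.card_le_card_of_injective
    (fun s => Function.Embedding.inl.trans s.2.some.symm.toEquiv.toEmbedding) fun s t hst => ?_
  have h a : s.2.some.symm (Sum.inl a) = t.2.some.symm (Sum.inl a) :=
    DFunLike.congr_fun hst a
  exact Subtype.ext <| (subset_of_iso_induceRight hG _ _ h).antisymm
    (subset_of_iso_induceRight hG _ _ fun a => (h a).symm)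

end SimpleGraph

/-- let `F'` be a graph on `V₁ ⊕ V₂` with `|V₁| = k`, `|V₂| = 2^k`, whose
cross edges realize every subset of `V₁` as the neighbourhood in `V₁` of exactly one
vertex of `V₂` (arbitrary edges inside `V₁` and inside `V₂` are allowed). Then `F'` has
at least `C(2^k, k) / (k!·C(2k, k))` pairwise non-isomorphic induced subgraphs of
order `2k`. -/
theorem many_induced_subgraphs (k : ℕ) (V₁ V₂ : Type) [Fintype V₁] [Fintype V₂]
    (h1 : Fintype.card V₁ = k) (h2 : Fintype.card V₂ = 2 ^ k)
    (F' : SimpleGraph (V₁ ⊕ V₂))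
    (hnbr : Function.Bijective
      (fun w : V₂ => {a : V₁ | F'.Adj (Sum.inl a) (Sum.inr w)})) :
    ∃ N : ℕ, (((2 ^ k).choose k : ℚ)) / ((Nat.factorial k : ℚ) * ((2 * k).choose k : ℚ)) ≤ N ∧
      ∃ H : Fin N → SimpleGraph (Fin (2 * k)),
        (∀ i, Nonempty ((H i) ↪g F')) ∧
        ∀ i j, i ≠ j → IsEmpty ((H i) ≃g (H j)) := by
  classical
  have hcard (S : {S : Finset V₂ // S.card = k}) :
      Fintype.card (V₁ ⊕ (S.1 : Set V₂)) = 2 * k := by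
    simp [h1, S.2, two_mul]
  let G S := (F'.induceRight S.1).overFin (hcard S)
  have hclass S : Nat.card {S' // Nonempty (G S ≃g G S')} ≤ k.factorial * (2 * k).choose k :=
    calc Nat.card {S' // Nonempty (G S ≃g G S')}
      _ ≤ Nat.card {s : Set V₂ // Nonempty (G S ≃g F'.induceRight s)} :=
        Nat.card_le_card_of_injective
          (fun S' => ⟨S'.1.1, S'.2.map fun e => e.trans (overFinIso _ _).symm⟩)
          fun _ _ h => Subtype.ext <| Subtype.ext <| Finset.coe_injective congr($h.1)
      _ ≤ Nat.card (V₁ ↪ Fin (2 * k)) := card_iso_induceRight_le hnbr.injective _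
      _ = _ := by
        rw [Nat.card_eq_fintype_card, Fintype.card_embedding_eq, Fintype.card_fin, h1,
          Nat.descFactorial_eq_factorial_mul_choose]
  obtain ⟨N, hN, r, hr⟩ := exists_pairwise_isEmpty_iso_of_card_iso_le G hclass
  refine ⟨N, ?_, G ∘ r, fun i => ⟨((F'.induceRight _).overFinIso _).symm.toEmbedding.trans
    (F'.induceRightEmbedding _)⟩, hr⟩
  rw [Fintype.card_finset_len, h2, mul_comm] at hN
  exact div_le_of_le_mul₀ (by positivity) (by positivity) (mod_cast hN)
end
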